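/- arXiv:1203.3563 — 2 statements merged into one kernel-verified Lean document; each statement's English description precedes it below -/
import Mathlib

section
/- Let n ≥ 2, let u, u' ∈ ℝⁿ be unit timelike vectors, and let S be a real n×n matrix. If θ_uᵀ S θ_u = S and θ_{u'}ᵀ S θ_{u'} = −S, then S = 0. In other words, a nonzero rank-2 tensor cannot be purely electric with respect to one unit timelike direction and purely magnetic with respect to another (possibly different) unit timelike direction. -/
open Matrix

noncomputable section

/-- The Minkowski metric `η = diag(-1, 1, …, 1)` on `ℝⁿ`. -/
def eta (n : ℕ) : Matrix (Fin n) (Fin n) ℝ :=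
  Matrix.diagonal fun i => if i.val = 0 then (-1 : ℝ) else 1

/-- The reflection `θ_u = I + 2u(ηu)ᵀ` sending `u ↦ -u` and fixing `u^⊥`. -/
def theta {n : ℕ} (u : Fin n → ℝ) : Matrix (Fin n) (Fin n) ℝ :=
  1 + (2 : ℝ) • vecMulVec u ((eta n).mulVec u)

/-! `N_u := θ_u η = η + 2uuᵀ` is symmetric, so `θ_u η = η θ_uᵀ`, and a cyclic permutation under
the trace turns `tr(N_u Sᵀ N_u S)` into `tr(η Sᵀ η (θ_uᵀ S θ_u))`. Hence if `θ_uᵀ S θ_u = c S`,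
the Lorentz invariant `tr(η Sᵀ η S)` equals `c · tr(N_u Sᵀ N_u S)`. Moreover `N_u` is positive
definite (it is the Euclidean metric seen by the observer `u`), and `tr(N Sᵀ N S) > 0` for positive
definite `N` and `S ≠ 0`, being the value at `vec S` of the positive definite form `N ⊗ N`.
So the invariant of a nonzero `S` is positive if `S` is electric (`c = 1`) and negative if `S` is
magnetic (`c = -1`) with respect to some unit timelike vector. -/

open scoped Kronecker in
theorem trace_mul_transpose_mul_mul_pos {ι : Type*} [Fintype ι] {N S : Matrix ι ι ℝ}
    (hN : N.PosDef) (hS : S ≠ 0) : 0 < trace (N * Sᵀ * N * S) := by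
  have hNsymm : Nᵀ = N := by simpa using hN.isHermitian.eq
  have hvec := (hN.kronecker hN).dotProduct_mulVec_pos (vec_eq_zero_iff.not.mpr hS)
  rw [kronecker_mulVec_vec, hNsymm, star_trivial, vec_dotProduct_vec] at hvec
  rw [Matrix.mul_assoc (N * Sᵀ), Matrix.mul_assoc N, trace_mul_comm]
  simpa only [Matrix.mul_assoc] using hvec

theorem trace_mul_transpose_mul_mul_of_mul_eq_mul_transpose {R ι : Type*} [CommSemiring R]
    [Fintype ι] {θ E : Matrix ι ι R} (h : θ * E = E * θᵀ) (S : Matrix ι ι R) :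
    trace (θ * E * Sᵀ * (θ * E) * S) = trace (E * Sᵀ * E * (θᵀ * S * θ)) := by
  calc trace (θ * E * Sᵀ * (θ * E) * S) = trace (E * Sᵀ * (θ * E) * S * θ) := by
        simp only [Matrix.mul_assoc]
        rw [trace_mul_comm θ]
        simp only [Matrix.mul_assoc]
    _ = trace (E * Sᵀ * E * (θᵀ * S * θ)) := by
        rw [h]
        simp only [Matrix.mul_assoc]

-- The form `⟨x, x⟩ + 2⟨x, u⟩²` in coordinates: `a = x₀`, `b = u₀`, `s = ∑ xᵢuᵢ`, `X = ∑ xᵢ²`,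
-- `W = ∑ uᵢ²`, the sums running over `i ≥ 1`.
theorem neg_sq_add_add_two_mul_sq_pos {a b s X W : ℝ} (hX : 0 ≤ X) (hW : 0 ≤ W)
    (hb : b ^ 2 = 1 + W) (hCS : s ^ 2 ≤ X * W) (hpos : 0 < a ^ 2 + X) :
    0 < -a ^ 2 + X + 2 * (a * b + s) ^ 2 := by
  have hid : (1 + 2 * W) * b ^ 2 * (-a ^ 2 + X + 2 * (a * b + s) ^ 2)
      = ((1 + 2 * W) * (a * b + s) + s) ^ 2 + b ^ 2 * (X + 2 * (X * W - s ^ 2)) := by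
    obtain rfl : W = b ^ 2 - 1 := by linarith
    ring
  by_contra! hT
  have hnonpos : (1 + 2 * W) * b ^ 2 * (-a ^ 2 + X + 2 * (a * b + s) ^ 2) ≤ 0 :=
    mul_nonpos_of_nonneg_of_nonpos (by positivity) hT
  have hX0 : X = 0 := by nlinarith [sq_nonneg ((1 + 2 * W) * (a * b + s) + s)]
  have hs0 : s = 0 := by nlinarith
  subst hX0 hs0
  have ha0 : a = 0 := by nlinarith [sq_nonneg (a * b)]
  simp [ha0] at hpos

section Minkowski

variable {n : ℕ}

theorem eta_transpose : (eta n)ᵀ = eta n := diagonal_transpose _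

theorem eta_mul_eta : eta n * eta n = 1 := by
  rw [eta, diagonal_mul_diagonal, ← diagonal_one]
  congr 1
  ext i
  split_ifs <;> norm_num

theorem eta_mulVec_cons (b : ℝ) (y : Fin n → ℝ) : eta (n + 1) *ᵥ vecCons b y = vecCons (-b) y := by
  ext i
  refine Fin.cases ?_ (fun j => ?_) i <;> simp [eta, mulVec_diagonal]

theorem theta_mul_eta (u : Fin n → ℝ) : theta u * eta n = eta n + (2 : ℝ) • vecMulVec u u := by
  rw [theta, Matrix.add_mul, Matrix.one_mul, Matrix.smul_mul, vecMulVec_mul, ← mulVec_transpose,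
    eta_transpose, mulVec_mulVec, eta_mul_eta, one_mulVec]

theorem theta_mul_eta_eq_eta_mul_transpose (u : Fin n → ℝ) :
    theta u * eta n = eta n * (theta u)ᵀ := by
  have hsymm : (theta u * eta n)ᵀ = theta u * eta n := by
    rw [theta_mul_eta, transpose_add, transpose_smul, transpose_vecMulVec, eta_transpose]
  conv_lhs => rw [← hsymm, transpose_mul, eta_transpose]

theorem dotProduct_eta_mulVec_add_two_mul_sq_pos {u x : Fin n → ℝ}
    (hu : u ⬝ᵥ eta n *ᵥ u = -1) (hx : x ≠ 0) :
    0 < x ⬝ᵥ eta n *ᵥ x + 2 * (x ⬝ᵥ u) ^ 2 := by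
  cases n with
  | zero => exact absurd (Subsingleton.elim x 0) hx
  | succ m =>
    obtain ⟨a, X, rfl⟩ : ∃ a X, x = vecCons a X := ⟨_, _, (cons_head_tail x).symm⟩
    obtain ⟨b, W, rfl⟩ : ∃ b W, u = vecCons b W := ⟨_, _, (cons_head_tail u).symm⟩
    simp only [eta_mulVec_cons, cons_dotProduct_cons] at hu ⊢
    have hsq (v : Fin m → ℝ) : 0 ≤ v ⬝ᵥ v := by simpa using dotProduct_star_self_nonneg v
    have hCS : (X ⬝ᵥ W) ^ 2 ≤ (X ⬝ᵥ X) * (W ⬝ᵥ W) := by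
      simpa only [dotProduct, sq] using Finset.sum_mul_sq_le_sq_mul_sq Finset.univ X W
    have hpos : 0 < a ^ 2 + X ⬝ᵥ X := by
      rcases cons_nonzero_iff.mp hx with ha | hX
      · have := hsq X
        positivity
      · have := dotProduct_star_self_pos_iff.mpr hX
        simp only [star_trivial] at this
        positivity
    convert neg_sq_add_add_two_mul_sq_pos (b := b) (hsq X) (hsq W) (by linarith) hCS hpos using 1
    ring

theorem posDef_eta_add_two_smul_vecMulVec {u : Fin n → ℝ} (hu : u ⬝ᵥ eta n *ᵥ u = -1) :
    (eta n + (2 : ℝ) • vecMulVec u u).PosDef := by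
  refine .of_dotProduct_mulVec_pos ?_ fun x hx => ?_
  · simp [IsHermitian, conjTranspose_eq_transpose_of_trivial, eta_transpose]
  · rw [star_trivial, add_mulVec, smul_mulVec, vecMulVec_mulVec, dotProduct_add, dotProduct_smul,
      dotProduct_smul, op_smul_eq_mul, smul_eq_mul, dotProduct_comm u x, ← sq]
    exact dotProduct_eta_mulVec_add_two_mul_sq_pos hu hx

end Minkowski

theorem stmt5_general {n : ℕ} (u u' : Fin n → ℝ)
    (hu : u ⬝ᵥ (eta n).mulVec u = -1) (hu' : u' ⬝ᵥ (eta n).mulVec u' = -1)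
    (S : Matrix (Fin n) (Fin n) ℝ)
    (hPE : (theta u)ᵀ * S * theta u = S)
    (hPM : (theta u')ᵀ * S * theta u' = -S) :
    S = 0 := by
  by_contra hS
  have hpos {w : Fin n → ℝ} (hw : w ⬝ᵥ eta n *ᵥ w = -1) :
      0 < trace (theta w * eta n * Sᵀ * (theta w * eta n) * S) := by
    apply trace_mul_transpose_mul_mul_pos _ hS
    rw [theta_mul_eta]
    exact posDef_eta_add_two_smul_vecMulVec hw
  have hE := hpos hu
  have hM := hpos hu'
  rw [trace_mul_transpose_mul_mul_of_mul_eq_mul_transpose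
    (theta_mul_eta_eq_eta_mul_transpose _), hPE] at hE
  rw [trace_mul_transpose_mul_mul_of_mul_eq_mul_transpose
    (theta_mul_eta_eq_eta_mul_transpose _), hPM, Matrix.mul_neg, trace_neg] at hM
  linarith

/-- A nonzero rank-2 tensor cannot be purely electric with respect to one unit
timelike direction and purely magnetic with respect to another. -/
theorem stmt5 {n : ℕ} (hn : 2 ≤ n) (u u' : Fin n → ℝ)
    (hu : u ⬝ᵥ (eta n).mulVec u = -1) (hu' : u' ⬝ᵥ (eta n).mulVec u' = -1)
    (S : Matrix (Fin n) (Fin n) ℝ)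
    (hPE : (theta u)ᵀ * S * theta u = S)
    (hPM : (theta u')ᵀ * S * theta u' = -S) :
    S = 0 :=
  stmt5_general u u' hu hu' S hPE hPM

end
end

section
/- Let n ≥ 4, let C be a trace-free Weyl candidate on ℝⁿ, let u, u' be unit timelike vectors with u' ≠ u and u' ≠ −u, and let ε, ε' ∈ {+1, −1}. Suppose θ_u·C = ε C and θ_{u'}·C = ε' C. Then for every pair of null vectors ℓ, m lying in the plane spanned by u and u' with ℓᵀηm = 1, and for all vectors x, y, z that are η-orthogonal to both ℓ and m, one has C(ℓ,x,ℓ,y) = 0, C(m,x,m,y) = 0, C(ℓ,x,y,z) = 0, C(m,x,y,z) = 0, C(ℓ,m,ℓ,x) = 0, and C(ℓ,m,m,x) = 0; that is, both null directions of the timelike plane spanned by u and u' are doubly aligned null directions (double WANDs) of C, so C is of alignment type D (or O). -/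
open Matrix

noncomputable section

/-- A null vector: nonzero with `vᵀηv = 0`. -/
def IsNull {n : ℕ} (v : Fin n → ℝ) : Prop :=
  v ≠ 0 ∧ v ⬝ᵥ (eta n).mulVec v = 0

/-- The pullback action of a matrix `Λ` on rank-4 covariant tensors. -/
def pull {n : ℕ} (Λ : Matrix (Fin n) (Fin n) ℝ)
    (C : Fin n → Fin n → Fin n → Fin n → ℝ) : Fin n → Fin n → Fin n → Fin n → ℝ :=
  fun a b c d => ∑ a', ∑ b', ∑ c', ∑ d',
    C a' b' c' d' * Λ a' a * Λ b' b * Λ c' c * Λ d' d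

/-- Evaluation of a rank-4 covariant tensor on four vectors. -/
def ap {n : ℕ} (C : Fin n → Fin n → Fin n → Fin n → ℝ)
    (v₁ v₂ v₃ v₄ : Fin n → ℝ) : ℝ :=
  ∑ a, ∑ b, ∑ c, ∑ d, C a b c d * v₁ a * v₂ b * v₃ c * v₄ d


lemma bexp {n : ℕ} (v w : Fin n → ℝ) :
    v ⬝ᵥ (eta n).mulVec w = ∑ i, (if (i:Fin n).val = 0 then (-1:ℝ) else 1) * v i * w i := by
  simp only [eta, dotProduct, Matrix.mulVec_diagonal]
  exact Finset.sum_congr rfl fun i _ => by ring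

lemma bsymm {n : ℕ} (v w : Fin n → ℝ) :
    v ⬝ᵥ (eta n).mulVec w = w ⬝ᵥ (eta n).mulVec v := by
  rw [bexp, bexp]; exact Finset.sum_congr rfl fun i _ => by ring

lemma vmv_mulVec {n : ℕ} (a b v : Fin n → ℝ) :
    (vecMulVec a b).mulVec v = (b ⬝ᵥ v) • a := by
  funext i
  simp only [Matrix.mulVec, dotProduct, vecMulVec_apply, Pi.smul_apply, smul_eq_mul,
    Finset.sum_mul]
  exact Finset.sum_congr rfl fun j _ => by ring

lemma theta_mulVec {n : ℕ} (u v : Fin n → ℝ) :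
    (theta u).mulVec v = v + (2 * (u ⬝ᵥ (eta n).mulVec v)) • u := by
  rw [theta, Matrix.add_mulVec, Matrix.one_mulVec, Matrix.smul_mulVec, vmv_mulVec]
  rw [dotProduct_comm, bsymm v u, smul_smul]

lemma ap_pull {n : ℕ} (Λ : Matrix (Fin n) (Fin n) ℝ) (C : Fin n → Fin n → Fin n → Fin n → ℝ)
    (v₁ v₂ v₃ v₄ : Fin n → ℝ) :
    ap (pull Λ C) v₁ v₂ v₃ v₄ = ap C (Λ *ᵥ v₁) (Λ *ᵥ v₂) (Λ *ᵥ v₃) (Λ *ᵥ v₄) := by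
  simp only [ap, pull, Matrix.mulVec, dotProduct, Finset.sum_mul, Finset.mul_sum,
    ← Finset.sum_product', Finset.univ_product_univ]
  refine Fintype.sum_equiv
    ⟨fun p => ⟨p.2.2.2.2.1, p.2.2.2.2.2.1, p.2.2.2.2.2.2.1, p.2.2.2.2.2.2.2,
        p.2.2.2.1, p.2.2.1, p.2.1, p.1⟩,
     fun p => ⟨p.2.2.2.2.2.2.2, p.2.2.2.2.2.2.1, p.2.2.2.2.2.1, p.2.2.2.2.1,
        p.1, p.2.1, p.2.2.1, p.2.2.2.1⟩,
     by intro ⟨a,b,c,d,e,f,g,h⟩; rfl, by intro ⟨a,b,c,d,e,f,g,h⟩; rfl⟩ _ _ ?_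
  intro p
  obtain ⟨a, b, c, d, A, B, CC, D⟩ := p
  dsimp only [Equiv.coe_fn_mk]
  ring

lemma ap_smul₁ {n : ℕ} (C : Fin n → Fin n → Fin n → Fin n → ℝ) (r : ℝ)
    (v₁ v₂ v₃ v₄ : Fin n → ℝ) : ap C (r • v₁) v₂ v₃ v₄ = r * ap C v₁ v₂ v₃ v₄ := by
  simp only [ap, Pi.smul_apply, smul_eq_mul, Finset.mul_sum]
  exact Finset.sum_congr rfl fun a _ => Finset.sum_congr rfl fun b _ =>
    Finset.sum_congr rfl fun c _ => Finset.sum_congr rfl fun d _ => by ring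

lemma ap_smul₂ {n : ℕ} (C : Fin n → Fin n → Fin n → Fin n → ℝ) (r : ℝ)
    (v₁ v₂ v₃ v₄ : Fin n → ℝ) : ap C v₁ (r • v₂) v₃ v₄ = r * ap C v₁ v₂ v₃ v₄ := by
  simp only [ap, Pi.smul_apply, smul_eq_mul, Finset.mul_sum]
  exact Finset.sum_congr rfl fun a _ => Finset.sum_congr rfl fun b _ =>
    Finset.sum_congr rfl fun c _ => Finset.sum_congr rfl fun d _ => by ring

lemma ap_smul₃ {n : ℕ} (C : Fin n → Fin n → Fin n → Fin n → ℝ) (r : ℝ)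
    (v₁ v₂ v₃ v₄ : Fin n → ℝ) : ap C v₁ v₂ (r • v₃) v₄ = r * ap C v₁ v₂ v₃ v₄ := by
  simp only [ap, Pi.smul_apply, smul_eq_mul, Finset.mul_sum]
  exact Finset.sum_congr rfl fun a _ => Finset.sum_congr rfl fun b _ =>
    Finset.sum_congr rfl fun c _ => Finset.sum_congr rfl fun d _ => by ring

lemma ap_const_smul {n : ℕ} (C : Fin n → Fin n → Fin n → Fin n → ℝ) (r : ℝ)
    (v₁ v₂ v₃ v₄ : Fin n → ℝ) :
    ap (fun a b c d => r * C a b c d) v₁ v₂ v₃ v₄ = r * ap C v₁ v₂ v₃ v₄ := by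
  simp only [ap, Finset.mul_sum]
  exact Finset.sum_congr rfl fun a _ => Finset.sum_congr rfl fun b _ =>
    Finset.sum_congr rfl fun c _ => Finset.sum_congr rfl fun d _ => by ring

lemma b_theta {n : ℕ} (u : Fin n → ℝ) (hu : u ⬝ᵥ (eta n).mulVec u = -1) (v w : Fin n → ℝ) :
    ((theta u).mulVec v) ⬝ᵥ (eta n).mulVec ((theta u).mulVec w) = v ⬝ᵥ (eta n).mulVec w := by
  rw [theta_mulVec, theta_mulVec]
  simp only [Matrix.mulVec_add, Matrix.mulVec_smul, dotProduct_add, add_dotProduct,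
    smul_dotProduct, dotProduct_smul, smul_eq_mul]
  rw [bsymm v u, hu]
  ring

lemma timelike_orth {n : ℕ} (hn0 : 0 < n) (u w : Fin n → ℝ)
    (hu : u ⬝ᵥ (eta n).mulVec u = -1)
    (h1 : u ⬝ᵥ (eta n).mulVec w = 0)
    (h2 : w ⬝ᵥ (eta n).mulVec w = 0) : w = 0 := by
  set i0 : Fin n := ⟨0, hn0⟩ with hi0
  have key : ∀ v v' : Fin n → ℝ,
      v ⬝ᵥ (eta n).mulVec v' =
        -(v i0 * v' i0) + ∑ i ∈ Finset.univ.erase i0, v i * v' i := by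
    intro v v'
    rw [bexp, ← Finset.sum_erase_add _ _ (Finset.mem_univ i0)]
    have : ∀ i ∈ Finset.univ.erase i0,
        (if (i:Fin n).val = 0 then (-1:ℝ) else 1) * v i * v' i = v i * v' i := by
      intro i hi
      have hne : i ≠ i0 := (Finset.mem_erase.mp hi).1
      have : i.val ≠ 0 := fun h => hne (Fin.ext h)
      rw [if_neg this, one_mul]
    rw [Finset.sum_congr rfl this]
    simp [i0]
    ring
  rw [key] at hu h1 h2
  set S := Finset.univ.erase i0
  have hcs := Finset.sum_mul_sq_le_sq_mul_sq S (fun i => u i) (fun i => w i)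
  have hsq : ∀ f : Fin n → ℝ, ∑ i ∈ S, f i ^ 2 = ∑ i ∈ S, f i * f i :=
    fun f => Finset.sum_congr rfl fun i _ => by ring
  rw [hsq, hsq] at hcs
  have h1' : ∑ i ∈ S, u i * w i = u i0 * w i0 := by linarith
  have h2' : ∑ i ∈ S, w i * w i = w i0 * w i0 := by linarith
  have hu' : ∑ i ∈ S, u i * u i = u i0 * u i0 - 1 := by linarith
  rw [h1', h2', hu'] at hcs
  have hww : w i0 * w i0 ≤ 0 := by nlinarith
  have hw0 : w i0 = 0 := by
    have := mul_self_nonneg (w i0)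
    nlinarith
  have hsum0 : ∑ i ∈ S, w i * w i = 0 := by rw [h2', hw0]; ring
  have hall : ∀ i ∈ S, w i * w i = 0 := by
    intro i hi
    have := (Finset.sum_eq_zero_iff_of_nonneg (fun i _ => mul_self_nonneg (w i))).mp hsum0
    exact this i hi
  funext i
  by_cases h : i = i0
  · rw [h]; exact hw0
  · have : i ∈ S := Finset.mem_erase.mpr ⟨h, Finset.mem_univ i⟩
    have := hall i this
    have := mul_self_eq_zero.mp this
    exact this

set_option maxHeartbeats 2000000 in
/-- A trace-free Weyl candidate which is purely electric or purely magnetic with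
respect to two distinct unit timelike directions `u`, `u'` has both null directions of
the timelike plane spanned by `u` and `u'` as double WANDs (so is of type D or O). -/
theorem stmt10 {n : ℕ} (hn : 4 ≤ n)
    (C : Fin n → Fin n → Fin n → Fin n → ℝ)
    (hanti1 : ∀ a b c d, C b a c d = -C a b c d)
    (hanti2 : ∀ a b c d, C a b d c = -C a b c d)
    (hpair : ∀ a b c d, C c d a b = C a b c d)
    (hbianchi : ∀ a b c d, C a b c d + C a c d b + C a d b c = 0)
    (htracefree : ∀ b d, ∑ a, ∑ c, eta n a c * C a b c d = 0)
    (u u' : Fin n → ℝ)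
    (hu : u ⬝ᵥ (eta n).mulVec u = -1) (hu' : u' ⬝ᵥ (eta n).mulVec u' = -1)
    (hne : u' ≠ u) (hne' : u' ≠ -u)
    (ε ε' : ℝ) (hε : ε = 1 ∨ ε = -1) (hε' : ε' = 1 ∨ ε' = -1)
    (hC : pull (theta u) C = (fun a b c d => ε * C a b c d))
    (hC' : pull (theta u') C = (fun a b c d => ε' * C a b c d))
    (l m : Fin n → ℝ) (hl : IsNull l) (hm : IsNull m)
    (hlplane : ∃ s t : ℝ, l = s • u + t • u')
    (hmplane : ∃ s t : ℝ, m = s • u + t • u')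
    (hlm : l ⬝ᵥ (eta n).mulVec m = 1)
    (x y z : Fin n → ℝ)
    (hxl : l ⬝ᵥ (eta n).mulVec x = 0) (hxm : m ⬝ᵥ (eta n).mulVec x = 0)
    (hyl : l ⬝ᵥ (eta n).mulVec y = 0) (hym : m ⬝ᵥ (eta n).mulVec y = 0)
    (hzl : l ⬝ᵥ (eta n).mulVec z = 0) (hzm : m ⬝ᵥ (eta n).mulVec z = 0) :
    ap C l x l y = 0 ∧ ap C m x m y = 0 ∧
    ap C l x y z = 0 ∧ ap C m x y z = 0 ∧
    ap C l m l x = 0 ∧ ap C l m m x = 0 := by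
  obtain ⟨s, t, hls⟩ := hlplane
  obtain ⟨s', t', hms⟩ := hmplane
  set P : ℝ := u ⬝ᵥ (eta n).mulVec u' with hP
  have hsymP : u' ⬝ᵥ (eta n).mulVec u = P := by rw [bsymm u' u]
  -- expanded bilinear identities
  have e1 : -(s*s) + 2*s*t*P - t*t = 0 := by
    have h := hl.2
    rw [hls] at h
    simp only [Matrix.mulVec_add, Matrix.mulVec_smul, dotProduct_add, add_dotProduct,
      smul_dotProduct, dotProduct_smul, smul_eq_mul] at h
    rw [hsymP, hu, hu'] at h
    linear_combination h
  have e2 : -(s'*s') + 2*s'*t'*P - t'*t' = 0 := by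
    have h := hm.2
    rw [hms] at h
    simp only [Matrix.mulVec_add, Matrix.mulVec_smul, dotProduct_add, add_dotProduct,
      smul_dotProduct, dotProduct_smul, smul_eq_mul] at h
    rw [hsymP, hu, hu'] at h
    linear_combination h
  have e3 : -(s*s') + (s*t' + t*s')*P - t*t' = 1 := by
    have h := hlm
    rw [hls, hms] at h
    simp only [Matrix.mulVec_add, Matrix.mulVec_smul, dotProduct_add, add_dotProduct,
      smul_dotProduct, dotProduct_smul, smul_eq_mul] at h
    rw [hsymP, hu, hu'] at h
    linear_combination h
  -- t ≠ 0 and t' ≠ 0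
  have hlne : l ≠ 0 := hl.1
  have hmne : m ≠ 0 := hm.1
  have ht : t ≠ 0 := by
    intro h
    rw [h] at e1
    have hs : s = 0 := mul_self_eq_zero.mp (by linear_combination -e1)
    exact hlne (by rw [hls, h, hs]; simp)
  have ht' : t' ≠ 0 := by
    intro h
    rw [h] at e2
    have hs : s' = 0 := mul_self_eq_zero.mp (by linear_combination -e2)
    exact hmne (by rw [hms, h, hs]; simp)
  -- determinant nonzero
  have hd : s * t' - t * s' ≠ 0 := by
    intro hd0
    have hv : t' • l - t • m = (s*t' - t*s') • u := by
      rw [hls, hms]; module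
    rw [hd0, zero_smul] at hv
    have : l ⬝ᵥ (eta n).mulVec (t' • l - t • m) = 0 := by
      rw [hv]; simp
    rw [Matrix.mulVec_sub, Matrix.mulVec_smul, Matrix.mulVec_smul, dotProduct_sub,
      dotProduct_smul, dotProduct_smul, hl.2, hlm, smul_eq_mul, smul_eq_mul] at this
    have htz : t = 0 := by linarith
    exact ht htz
  -- orthogonality of x, y, z to u and u'
  have orth : ∀ w : Fin n → ℝ, l ⬝ᵥ (eta n).mulVec w = 0 → m ⬝ᵥ (eta n).mulVec w = 0 →
      u ⬝ᵥ (eta n).mulVec w = 0 ∧ u' ⬝ᵥ (eta n).mulVec w = 0 := by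
    intro w h1 h2
    rw [hls] at h1
    rw [hms] at h2
    simp only [add_dotProduct, smul_dotProduct, smul_eq_mul] at h1 h2
    constructor
    · have key : (s*t' - t*s') * (u ⬝ᵥ (eta n).mulVec w) = 0 := by
        linear_combination t' * h1 - t * h2
      rcases mul_eq_zero.mp key with h | h
      · exact absurd h hd
      · exact h
    · have key : (s*t' - t*s') * (u' ⬝ᵥ (eta n).mulVec w) = 0 := by
        linear_combination s * h2 - s' * h1
      rcases mul_eq_zero.mp key with h | h
      · exact absurd h hd
      · exact h
  obtain ⟨hux, hu'x⟩ := orth x hxl hxm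
  obtain ⟨huy, hu'y⟩ := orth y hyl hym
  obtain ⟨huz, hu'z⟩ := orth z hzl hzm
  -- the boost
  set lam : ℝ := (2*s*P - t)/t with hlam
  set mu : ℝ := (2*s'*P - t')/t' with hmu
  have hfix : ∀ w : Fin n → ℝ, u ⬝ᵥ (eta n).mulVec w = 0 → u' ⬝ᵥ (eta n).mulVec w = 0 →
      (theta u).mulVec ((theta u').mulVec w) = w := by
    intro w h1 h2
    rw [theta_mulVec u' w, h2, mul_zero, zero_smul, add_zero, theta_mulVec u w, h1,
      mul_zero, zero_smul, add_zero]
  have hul : u ⬝ᵥ (eta n).mulVec l = -s + t * P := by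
    rw [hls]
    simp only [Matrix.mulVec_add, Matrix.mulVec_smul, dotProduct_add, dotProduct_smul,
      smul_eq_mul, hu, ← hP]
    ring
  have hu'l : u' ⬝ᵥ (eta n).mulVec l = s * P - t := by
    rw [hls]
    simp only [Matrix.mulVec_add, Matrix.mulVec_smul, dotProduct_add, dotProduct_smul,
      smul_eq_mul, hu', hsymP]
    ring
  have hum : u ⬝ᵥ (eta n).mulVec m = -s' + t' * P := by
    rw [hms]
    simp only [Matrix.mulVec_add, Matrix.mulVec_smul, dotProduct_add, dotProduct_smul,
      smul_eq_mul, hu, ← hP]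
    ring
  have hu'm : u' ⬝ᵥ (eta n).mulVec m = s' * P - t' := by
    rw [hms]
    simp only [Matrix.mulVec_add, Matrix.mulVec_smul, dotProduct_add, dotProduct_smul,
      smul_eq_mul, hu', hsymP]
    ring
  have hTl : (theta u).mulVec ((theta u').mulVec l) = lam • l := by
    rw [theta_mulVec u' l, hu'l, theta_mulVec]
    have : u ⬝ᵥ (eta n).mulVec (l + (2 * (s*P - t)) • u') = -s + t*P + 2*(s*P-t)*P := by
      rw [Matrix.mulVec_add, Matrix.mulVec_smul, dotProduct_add, dotProduct_smul, hul,
        smul_eq_mul, ← hP]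
    rw [this, hls, hlam]
    match_scalars
    · field_simp
      linear_combination (2*P) * e1
    · field_simp
      try ring
  have hTm : (theta u).mulVec ((theta u').mulVec m) = mu • m := by
    rw [theta_mulVec u' m, hu'm, theta_mulVec]
    have : u ⬝ᵥ (eta n).mulVec (m + (2 * (s'*P - t')) • u') = -s' + t'*P + 2*(s'*P-t')*P := by
      rw [Matrix.mulVec_add, Matrix.mulVec_smul, dotProduct_add, dotProduct_smul, hum,
        smul_eq_mul, ← hP]
    rw [this, hms, hmu]
    match_scalars
    · field_simp
      linear_combination (2*P) * e2
    · field_simp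
      try ring
  -- lam * mu = 1
  have hlmu : lam * mu = 1 := by
    have h := b_theta u hu ((theta u').mulVec l) ((theta u').mulVec m)
    rw [hTl, hTm, b_theta u' hu' l m, hlm] at h
    rw [smul_dotProduct, Matrix.mulVec_smul, dotProduct_smul, hlm, smul_eq_mul,
      smul_eq_mul] at h
    linear_combination h
  have hlam0 : lam ≠ 0 := by
    intro h; rw [h, zero_mul] at hlmu; exact zero_ne_one hlmu
  -- lam ≠ 1
  have hlam1 : lam ≠ 1 := by
    intro h
    rw [hlam, div_eq_one_iff_eq ht] at h
    -- 2*s*P - t = t, so s*P = t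
    have hsP : s * P = t := by linarith
    have hs0 : s ≠ 0 := by
      intro h0
      rw [h0, zero_mul] at hsP
      exact ht hsP.symm
    have hP2 : P*P = 1 := by
      have : s*s*(P*P - 1) = 0 := by linear_combination e1 + (s*P - t)*hsP
      rcases mul_eq_zero.mp this with h' | h'
      · exact absurd (mul_self_eq_zero.mp h') hs0
      · linarith
    have hw1 : u ⬝ᵥ (eta n).mulVec (u' + P • u) = 0 := by
      rw [Matrix.mulVec_add, Matrix.mulVec_smul, dotProduct_add, dotProduct_smul,
        smul_eq_mul, hu, ← hP]
      ring
    have hw2 : (u' + P • u) ⬝ᵥ (eta n).mulVec (u' + P • u) = 0 := by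
      simp only [Matrix.mulVec_add, Matrix.mulVec_smul, dotProduct_add, add_dotProduct,
        smul_dotProduct, dotProduct_smul, smul_eq_mul]
      rw [hsymP, hu, hu', ← hP]
      linear_combination hP2
    have hw0 : u' + P • u = 0 := timelike_orth (by omega) u (u' + P • u) hu hw1 hw2
    have hu'eq : u' = -(P • u) := eq_neg_of_add_eq_zero_left hw0
    rcases mul_self_eq_one_iff.mp hP2 with h' | h'
    · rw [h', one_smul] at hu'eq
      exact hne' hu'eq
    · rw [h'] at hu'eq
      exact hne (hu'eq.trans (by module))
  have hlamm1 : lam ≠ -1 := by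
    intro h
    rw [hlam, div_eq_iff ht] at h
    have hsP : s * P = 0 := by linarith
    have : t = 0 := by nlinarith [e1, hsP]
    exact ht this
  -- mu facts
  have hmu1 : mu ≠ 1 := fun h => hlam1 (by rw [h, mul_one] at hlmu; exact hlmu)
  have hmum1 : mu ≠ -1 := by
    intro h
    rw [h] at hlmu
    exact hlamm1 (by linarith)
  -- the covariance
  have step : ∀ w₁ w₂ w₃ w₄ : Fin n → ℝ,
      ap C ((theta u).mulVec w₁) ((theta u).mulVec w₂) ((theta u).mulVec w₃)
        ((theta u).mulVec w₄) = ε * ap C w₁ w₂ w₃ w₄ := by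
    intro w₁ w₂ w₃ w₄
    rw [← ap_pull, hC, ap_const_smul]
  have step' : ∀ w₁ w₂ w₃ w₄ : Fin n → ℝ,
      ap C ((theta u').mulVec w₁) ((theta u').mulVec w₂) ((theta u').mulVec w₃)
        ((theta u').mulVec w₄) = ε' * ap C w₁ w₂ w₃ w₄ := by
    intro w₁ w₂ w₃ w₄
    rw [← ap_pull, hC', ap_const_smul]
  have key : ∀ w₁ w₂ w₃ w₄ : Fin n → ℝ,
      ap C ((theta u).mulVec ((theta u').mulVec w₁)) ((theta u).mulVec ((theta u').mulVec w₂))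
        ((theta u).mulVec ((theta u').mulVec w₃)) ((theta u).mulVec ((theta u').mulVec w₄))
        = (ε * ε') * ap C w₁ w₂ w₃ w₄ := by
    intro w₁ w₂ w₃ w₄
    rw [step, step']
    ring
  have hTx := hfix x hux hu'x
  have hTy := hfix y huy hu'y
  have hTz := hfix z huz hu'z
  have finisher : ∀ κ T : ℝ, κ ≠ ε * ε' → κ * T = (ε * ε') * T → T = 0 := by
    intro κ T hκ h
    by_contra hT
    exact hκ (mul_right_cancel₀ hT h)
  have hll1 : lam * lam ≠ 1 := by
    intro h
    rcases mul_self_eq_one_iff.mp h with h' | h'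
    · exact hlam1 h'
    · exact hlamm1 h'
  have hllm1 : lam * lam ≠ -1 := by nlinarith [mul_self_nonneg lam]
  have hmm1 : mu * mu ≠ 1 := by
    intro h
    rcases mul_self_eq_one_iff.mp h with h' | h'
    · exact hmu1 h'
    · exact hmum1 h'
  have hmmm1 : mu * mu ≠ -1 := by nlinarith [mul_self_nonneg mu]
  have hsq_ne : lam * lam ≠ ε * ε' := by
    rcases hε with rfl | rfl <;> rcases hε' with rfl | rfl <;> norm_num <;>
      first | exact hll1 | exact hllm1
  have hlam_ne : lam ≠ ε * ε' := by
    rcases hε with rfl | rfl <;> rcases hε' with rfl | rfl <;> norm_num <;>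
      first | exact hlam1 | exact hlamm1
  have hmusq_ne : mu * mu ≠ ε * ε' := by
    rcases hε with rfl | rfl <;> rcases hε' with rfl | rfl <;> norm_num <;>
      first | exact hmm1 | exact hmmm1
  have hmu_ne : mu ≠ ε * ε' := by
    rcases hε with rfl | rfl <;> rcases hε' with rfl | rfl <;> norm_num <;>
      first | exact hmu1 | exact hmum1
  refine ⟨?_, ?_, ?_, ?_, ?_, ?_⟩
  · have h := key l x l y
    rw [hTl, hTx, hTy, ap_smul₁, ap_smul₃] at h
    exact finisher (lam * lam) _ hsq_ne (by linarith [h])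
  · have h := key m x m y
    rw [hTm, hTx, hTy, ap_smul₁, ap_smul₃] at h
    exact finisher (mu * mu) _ hmusq_ne (by linarith [h])
  · have h := key l x y z
    rw [hTl, hTx, hTy, hTz, ap_smul₁] at h
    exact finisher lam _ hlam_ne h
  · have h := key m x y z
    rw [hTm, hTx, hTy, hTz, ap_smul₁] at h
    exact finisher mu _ hmu_ne h
  · have h := key l m l x
    rw [hTl, hTm, hTx, ap_smul₁, ap_smul₂, ap_smul₃] at h
    refine finisher lam _ hlam_ne ?_
    calc lam * ap C l m l x = lam * (mu * (lam * ap C l m l x)) := by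
          rw [show lam * (mu * (lam * ap C l m l x)) = (lam*mu) * (lam * ap C l m l x) by ring,
            hlmu]; ring
      _ = (ε * ε') * ap C l m l x := h
  · have h := key l m m x
    rw [hTl, hTm, hTx, ap_smul₁, ap_smul₂, ap_smul₃] at h
    refine finisher mu _ hmu_ne ?_
    calc mu * ap C l m m x = lam * (mu * (mu * ap C l m m x)) := by
          rw [show lam * (mu * (mu * ap C l m m x)) = (lam*mu) * (mu * ap C l m m x) by ring,
            hlmu]; ring
      _ = (ε * ε') * ap C l m m x := h

end
end
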